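/- Let (K,v) be a maximal valued field of characteristic p > 0 such that (vK : pvK)·[Kv : Kv^p] is infinite (equivalently, K has infinite p-degree). Then the valued field (K^{1/p}, v), with the unique extension of v, is again maximal, although vK^{1/p}/vK is an infinite torsion group or the residue field extension K^{1/p}v | Kv is an infinite algebraic extension. -/

import Mathlib

/-! Common definitions for formalizing Blaszczok–Kuhlmann,
"Algebraic independence of elements in immediate extensions of valued fields". -/

universe u

namespace ValuedExt

variable {Γ : Type*} [LinearOrderedCommGroupWithZero Γ]

/-- The value group `vK` of a valued field `(K,v)`, as a subgroup of the units of `Γ`. -/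
def valGroup {K : Type*} [Field K] (v : Valuation K Γ) : Subgroup Γˣ :=
  (Units.map v.toMonoidWithZeroHom.toMonoidHom).range

/-- An extension `(L|K,v)` of valued fields (along the embedding `f`) is immediate if the
canonical embedding of value groups and the canonical embedding of residue fields are onto.
Expressed elementwise: every value of `L` is a value of `K`, and every residue of `L` is the
residue of an element of `K`. -/
def IsImmediate {K L : Type*} [Field K] [Field L] (f : K →+* L) (v : Valuation L Γ) : Prop :=
  (∀ x : L, x ≠ 0 → ∃ y : K, v (f y) = v x) ∧
  (∀ x : L, v x ≤ 1 → ∃ y : K, v (x - f y) < 1)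

/-- A valued field `(K,v)` is maximal if it admits no proper immediate extension. -/
def IsMaximalField {K : Type u} [Field K] (v : Valuation K Γ) : Prop :=
  ∀ (L : Type u) [Field L] (f : K →+* L) (w : Valuation L Γ),
    w.comap f = v → IsImmediate f w → Function.Surjective f

/-- The residue field `Kv` of a valued field `(K,v)`. -/
abbrev resField {K : Type*} [Field K] (v : Valuation K Γ) : Type _ :=
  IsLocalRing.ResidueField ↥v.valuationSubring

/-- The embedding of valuation rings induced by an embedding of valued fields. -/
def integerMap {K L : Type*} [Field K] [Field L] (f : K →+* L) (v : Valuation L Γ) :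
    ↥(v.comap f).valuationSubring →+* ↥v.valuationSubring where
  toFun x := ⟨f x.1, x.2⟩
  map_one' := Subtype.ext (map_one f)
  map_mul' x y := Subtype.ext (map_mul f x.1 y.1)
  map_zero' := Subtype.ext (map_zero f)
  map_add' x y := Subtype.ext (map_add f x.1 y.1)

instance integerMap_isLocalHom {K L : Type*} [Field K] [Field L] (f : K →+* L)
    (v : Valuation L Γ) : IsLocalHom (integerMap f v) := by
  constructor
  intro a ha
  obtain ⟨u, hu⟩ := ha
  have hval : v (f a.1) = 1 := by
    have h1 : v ((u : ↥v.valuationSubring) : L) * v (((u⁻¹ : _) : ↥v.valuationSubring) : L)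
        = 1 := by
      rw [← Valuation.map_mul]
      norm_cast
      rw [mul_inv_cancel]
      exact v.map_one
    have hle : v ((u : ↥v.valuationSubring) : L) ≤ 1 := (u : ↥v.valuationSubring).2
    have hle' : v (((u⁻¹ : _) : ↥v.valuationSubring) : L) ≤ 1 :=
      ((u⁻¹ : (↥v.valuationSubring)ˣ) : ↥v.valuationSubring).2
    have hx : v ((u : ↥v.valuationSubring) : L) = 1 := by
      rcases lt_or_eq_of_le hle with hlt | heq
      · exfalso
        have : v ((u : ↥v.valuationSubring) : L) * v (((u⁻¹ : _) : ↥v.valuationSubring) : L)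
            < 1 := by
          calc v _ * v _ ≤ v ((u : ↥v.valuationSubring) : L) * 1 := by
                first | gcongr | exact mul_le_mul_of_nonneg_left hle' zero_le'
            _ = v ((u : ↥v.valuationSubring) : L) := mul_one _
            _ < 1 := hlt
        rw [h1] at this
        exact lt_irrefl _ this
      · exact heq
    have : ((u : ↥v.valuationSubring) : L) = f a.1 := by
      rw [hu]; rfl
    rw [← this]
    exact hx
  have ha0 : a.1 ≠ 0 := by
    intro h0
    rw [h0, map_zero, Valuation.map_zero] at hval
    exact zero_ne_one hval
  have hinvmem : (a.1)⁻¹ ∈ (v.comap f).valuationSubring := by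
    rw [Valuation.mem_valuationSubring_iff, map_inv₀]
    show (v (f a.1))⁻¹ ≤ 1
    rw [hval, inv_one]
  refine isUnit_iff_exists_inv.mpr ⟨⟨(a.1)⁻¹, hinvmem⟩, ?_⟩
  exact Subtype.ext (mul_inv_cancel₀ ha0)

/-- The embedding of residue fields induced by an embedding of valued fields. -/
noncomputable def residueMap {K L : Type*} [Field K] [Field L] (f : K →+* L)
    (v : Valuation L Γ) : resField (v.comap f) →+* resField v :=
  IsLocalRing.ResidueField.map (integerMap f v)

/-- The transcendence degree of a field extension given by an embedding `f`. -/
noncomputable def trdeg {K L : Type*} [Field K] [Field L] (f : K →+* L) : Cardinal :=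
  letI : Algebra K L := f.toAlgebra
  ⨆ s : {s : Set L // AlgebraicIndependent K ((↑) : s → L)}, Cardinal.mk s.1

/-- The characteristic exponent of a field: `p` if the characteristic is `p > 0`, and `1` if the
characteristic is `0`. -/
noncomputable def charExponent (R : Type*) [CommSemiring R] : ℕ := max (ringChar R) 1

/-- A valued field `(K,v)` is henselian if `v` extends uniquely (up to equivalence) to the
algebraic closure of `K`. -/
def IsHenselian {K : Type u} [Field K] {Γ' : Type*} [LinearOrderedCommGroupWithZero Γ']
    (v : Valuation K Γ') : Prop :=
  ∀ (Γ₁ Γ₂ : Type u) [LinearOrderedCommGroupWithZero Γ₁] [LinearOrderedCommGroupWithZero Γ₂]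
    (w₁ : Valuation (AlgebraicClosure K) Γ₁) (w₂ : Valuation (AlgebraicClosure K) Γ₂),
    (w₁.comap (algebraMap K (AlgebraicClosure K))).IsEquiv v →
    (w₂.comap (algebraMap K (AlgebraicClosure K))).IsEquiv v →
    w₁.IsEquiv w₂

/-- The subfield `F^p` of `p`-th powers of a field `F` (as the subfield generated by the `p`-th
powers; in characteristic `p` it is exactly the set of `p`-th powers). -/
def pPowSubfield (F : Type*) [Field F] (p : ℕ) : Subfield F :=
  Subfield.closure (Set.range fun x : F => x ^ p)

/-- The degree `[F : F^p]`, as a cardinal. -/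
noncomputable def pDegreeRes (F : Type*) [Field F] (p : ℕ) : Cardinal :=
  Module.rank ↥(pPowSubfield F p) F

/-- The subgroup `p·G` of `p`-th powers (multiplicatively) of a subgroup `G` of `Γˣ`. -/
def pMulSubgroup {G : Type*} [CommGroup G] (H : Subgroup G) (p : ℕ) : Subgroup G :=
  H.map (powMonoidHom p)

/-- The cardinality of the quotient `H/N` (of the subgroup `N ⊓ H` in `H`). -/
noncomputable def quotCard {G : Type*} [CommGroup G] (H N : Subgroup G) : Cardinal :=
  Cardinal.mk (↥H ⧸ N.subgroupOf H)

/-- The index `(vK : p·vK)` for the value group of a valuation, as a cardinal. -/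
noncomputable def pIndexVal {K : Type*} [Field K] (v : Valuation K Γ) (p : ℕ) : Cardinal :=
  quotCard (valGroup v) (pMulSubgroup (valGroup v) p)

/-- The field `K^{1/p}` of `p`-th roots of elements of `K`, inside a fixed algebraic closure. -/
noncomputable def pRootField (K : Type u) [Field K] (p : ℕ) [Fact p.Prime] [CharP K p] :
    Subfield (AlgebraicClosure K) :=
  Subfield.comap (frobenius (AlgebraicClosure K) p)
    (algebraMap K (AlgebraicClosure K)).fieldRange

/-- The canonical embedding `K → K^{1/p}`. -/
noncomputable def pRootEmb (K : Type u) [Field K] (p : ℕ) [Fact p.Prime] [CharP K p] :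
    K →+* ↥(pRootField K p) where
  toFun x := ⟨algebraMap K (AlgebraicClosure K) x, by
    rw [pRootField, Subfield.mem_comap]
    exact ⟨x ^ p, by rw [map_pow]; rfl⟩⟩
  map_one' := Subtype.ext (map_one _)
  map_mul' x y := Subtype.ext (map_mul _ x y)
  map_zero' := Subtype.ext (map_zero _)
  map_add' x y := Subtype.ext (map_add _ x y)


/-- p-th power comparison in a linearly ordered group with zero. -/
theorem aux_pow_le_pow_iff {Γ' : Type*} [LinearOrderedCommGroupWithZero Γ'] {a b : Γ'} {p : ℕ}
    (hp : p ≠ 0) : a ^ p ≤ b ^ p ↔ a ≤ b :=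
  pow_le_pow_iff_left₀ zero_le' zero_le' hp

theorem aux_pow_inj {Γ' : Type*} [LinearOrderedCommGroupWithZero Γ'] {a b : Γ'} {p : ℕ}
    (hp : p ≠ 0) (h : a ^ p = b ^ p) : a = b :=
  le_antisymm ((aux_pow_le_pow_iff hp).mp h.le) ((aux_pow_le_pow_iff hp).mp h.ge)

/-- Given a valuation `vB` on `B` whose restriction along `h` is "equivalent" to `vA`, and whose
values all come from `A`, produce an honest `Γ`-valued valuation on `B` restricting to `vA`. -/
theorem exists_val_of_equiv {Γ Γ' : Type*} [LinearOrderedCommGroupWithZero Γ]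
    [LinearOrderedCommGroupWithZero Γ'] {A B : Type*} [Field A] [Field B]
    (h : A →+* B) (vA : Valuation A Γ) (vB : Valuation B Γ')
    (hsurj : ∀ x : B, x ≠ 0 → ∃ a : A, vB (h a) = vB x)
    (hequiv : ∀ a b : A, vB (h a) ≤ vB (h b) ↔ vA a ≤ vA b) :
    ∃ u : Valuation B Γ, u.comap h = vA ∧ ∀ x y : B, u x ≤ u y ↔ vB x ≤ vB y := by
  classical
  have hequivEq : ∀ a b : A, vB (h a) = vB (h b) → vA a = vA b := fun a b hab =>
    le_antisymm ((hequiv a b).1 hab.le) ((hequiv b a).1 hab.ge)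
  set uf : B → Γ := fun x => if hx : x = 0 then 0 else vA (Classical.choose (hsurj x hx)) with huf
  have key : ∀ (x : B) (hx : x ≠ 0) (a : A), vB (h a) = vB x → uf x = vA a := by
    intro x hx a ha
    have h1 : uf x = vA (Classical.choose (hsurj x hx)) := dif_neg hx
    rw [h1]
    exact hequivEq _ _ ((Classical.choose_spec (hsurj x hx)).trans ha.symm)
  have nz : ∀ (x : B), x ≠ 0 → uf x ≠ 0 := by
    intro x hx
    have h1 : uf x = vA (Classical.choose (hsurj x hx)) := dif_neg hx
    have h2 := Classical.choose_spec (hsurj x hx)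
    have hne : vB x ≠ 0 := vB.ne_zero_iff.mpr hx
    have : h (Classical.choose (hsurj x hx)) ≠ 0 := by
      intro h0; rw [h0, Valuation.map_zero] at h2; exact hne h2.symm
    have ha : Classical.choose (hsurj x hx) ≠ 0 := fun h0 => this (h0 ▸ map_zero h)
    rw [h1]; exact vA.ne_zero_iff.mpr ha
  have ord : ∀ x y : B, (uf x ≤ uf y ↔ vB x ≤ vB y) := by
    intro x y
    by_cases hx : x = 0
    · subst hx
      simp only [huf, dif_pos rfl, Valuation.map_zero]
      exact ⟨fun _ => zero_le', fun _ => zero_le'⟩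
    · by_cases hy : y = 0
      · subst hy
        simp only [huf, dif_pos rfl, Valuation.map_zero]
        constructor
        · intro hle
          exact absurd (le_zero_iff.mp hle) (nz x hx)
        · intro hle
          exact absurd (le_zero_iff.mp hle) (vB.ne_zero_iff.mpr hx)
      · have hx1 : uf x = vA (Classical.choose (hsurj x hx)) := dif_neg hx
        have hy1 : uf y = vA (Classical.choose (hsurj y hy)) := dif_neg hy
        rw [hx1, hy1, ← hequiv, Classical.choose_spec (hsurj x hx),
          Classical.choose_spec (hsurj y hy)]
  have ufzero : uf 0 = 0 := dif_pos rfl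
  have ufone : uf 1 = 1 := by
    have := key 1 one_ne_zero 1 (by rw [map_one])
    rw [this, Valuation.map_one]
  have ufmul : ∀ x y : B, uf (x * y) = uf x * uf y := by
    intro x y
    by_cases hx : x = 0
    · subst hx; rw [zero_mul, ufzero]; exact (zero_mul _).symm
    by_cases hy : y = 0
    · subst hy; rw [mul_zero, ufzero]; exact (mul_zero _).symm
    have hxy : x * y ≠ 0 := mul_ne_zero hx hy
    have hax := Classical.choose_spec (hsurj x hx)
    have hay := Classical.choose_spec (hsurj y hy)
    have : vB (h (Classical.choose (hsurj x hx) * Classical.choose (hsurj y hy))) = vB (x * y) := by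
      rw [map_mul, Valuation.map_mul, Valuation.map_mul, hax, hay]
    rw [key (x * y) hxy _ this, Valuation.map_mul, key x hx _ hax, key y hy _ hay]
  have ufadd : ∀ x y : B, uf (x + y) ≤ max (uf x) (uf y) := by
    intro x y
    by_cases hxy : x + y = 0
    · rw [hxy, ufzero]; exact zero_le'
    rcases le_max_iff.mp (vB.map_add x y) with hc | hc
    · exact le_max_of_le_left ((ord (x + y) x).mpr hc)
    · exact le_max_of_le_right ((ord (x + y) y).mpr hc)
  refine ⟨⟨⟨⟨uf, ufzero⟩, ufone, ufmul⟩, ufadd⟩, ?_, ord⟩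
  ext a
  show uf (h a) = vA a
  by_cases ha : a = 0
  · subst ha; rw [map_zero, ufzero, Valuation.map_zero]
  · exact key (h a) (fun h0 => ha (by simpa using (map_eq_zero_iff h h.injective).mp h0)) a rfl


section PRootInv

variable (K : Type u) [Field K] (p : ℕ) [Fact p.Prime] [CharP K p]

/-- The inverse Frobenius `K → K^{1/p}`, sending `a` to its unique `p`-th root. -/
noncomputable def pRootInv : K →+* ↥(pRootField K p) where
  toFun a := ⟨(frobeniusEquiv (AlgebraicClosure K) p).symm (algebraMap K (AlgebraicClosure K) a),
    by
      have : frobenius (AlgebraicClosure K) p ((frobeniusEquiv (AlgebraicClosure K) p).symm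
          (algebraMap K (AlgebraicClosure K) a)) = algebraMap K (AlgebraicClosure K) a := by
        rw [← coe_frobeniusEquiv]; exact RingEquiv.apply_symm_apply _ _
      show frobenius (AlgebraicClosure K) p _ ∈ (algebraMap K (AlgebraicClosure K)).fieldRange
      rw [this]; exact ⟨a, rfl⟩⟩
  map_one' := Subtype.ext (by simp)
  map_mul' x y := Subtype.ext (by push_cast; simp)
  map_zero' := Subtype.ext (by simp)
  map_add' x y := Subtype.ext (by push_cast; simp)

theorem pRootInv_pow (a : K) : (pRootInv K p a) ^ p = pRootEmb K p a := by
  refine Subtype.ext ?_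
  push_cast
  show ((frobeniusEquiv (AlgebraicClosure K) p).symm (algebraMap K (AlgebraicClosure K) a)) ^ p = _
  rw [← frobenius_def, ← coe_frobeniusEquiv, RingEquiv.apply_symm_apply]
  rfl

theorem pRootInv_surjective : Function.Surjective (pRootInv K p) := by
  intro z
  have hz : frobenius (AlgebraicClosure K) p ↑z ∈ (algebraMap K (AlgebraicClosure K)).fieldRange :=
    z.2
  obtain ⟨a, ha⟩ := hz
  refine ⟨a, Subtype.ext ?_⟩
  show (frobeniusEquiv (AlgebraicClosure K) p).symm (algebraMap K (AlgebraicClosure K) a) = ↑z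
  rw [ha, ← coe_frobeniusEquiv]
  exact RingEquiv.symm_apply_apply _ _

end PRootInv


/-- If `k'` is spanned over `k` (via `ρ`) by finitely many elements, and `p`-th powers interchange
`k` and `ρ(k)` appropriately, then `[k : k^p]` is finite. -/
theorem aux_rank_lt_of_fd {k k' : Type*} [Field k] [Field k'] (ρ : k →+* k') (p : ℕ)
    (hp : p ≠ 0)
    (hfrob : ∀ x y : k', (x + y) ^ p = x ^ p + y ^ p)
    (h1 : ∀ c : k, ∃ α : k', α ^ p = ρ c)
    (h2 : ∀ α : k', ∃ c : k, ρ c = α ^ p)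
    (hfd : letI := ρ.toAlgebra; FiniteDimensional k k') :
    Module.rank ↥(pPowSubfield k p) k < Cardinal.aleph0 := by
  classical
  letI := ρ.toAlgebra
  set F : k' → k := fun α => Classical.choose (h2 α) with hF
  have hFspec : ∀ α : k', ρ (F α) = α ^ p := fun α => Classical.choose_spec (h2 α)
  have hρinj := ρ.injective
  have hFadd : ∀ x y : k', F (x + y) = F x + F y := fun x y =>
    hρinj (by rw [map_add, hFspec, hFspec, hFspec, hfrob])
  have hFmul : ∀ x y : k', F (x * y) = F x * F y := fun x y =>
    hρinj (by rw [map_mul, hFspec, hFspec, hFspec, mul_pow])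
  have hFzero : F 0 = 0 := hρinj (by rw [hFspec, map_zero, zero_pow hp])
  have hFsurj : Function.Surjective F := by
    intro c; obtain ⟨α, hα⟩ := h1 c; exact ⟨α, hρinj (by rw [hFspec, hα])⟩
  have hFsmul : ∀ (c : k) (x : k'), F (c • x) = c ^ p * F x := by
    intro c x
    rw [Algebra.smul_def, RingHom.algebraMap_toAlgebra, hFmul]
    congr 1
    exact hρinj (by rw [hFspec, map_pow])
  obtain ⟨s, hs⟩ := Module.finite_def.mp hfd
  have main : ∀ α : k', α ∈ Submodule.span k (↑s : Set k') →
      F α ∈ Submodule.span ↥(pPowSubfield k p) (F '' ↑s) := by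
    intro α hα
    induction hα using Submodule.span_induction with
    | mem x hx => exact Submodule.subset_span ⟨x, hx, rfl⟩
    | zero => rw [hFzero]; exact Submodule.zero_mem _
    | add x y _ _ ihx ihy => rw [hFadd]; exact Submodule.add_mem _ ihx ihy
    | smul a x _ ih =>
        rw [hFsmul]
        have hmem : a ^ p ∈ pPowSubfield k p := Subfield.subset_closure ⟨a, rfl⟩
        have : (⟨a ^ p, hmem⟩ : ↥(pPowSubfield k p)) • F x = a ^ p * F x := rfl
        rw [← this]
        exact Submodule.smul_mem _ _ ih
  have htop : Submodule.span ↥(pPowSubfield k p) (F '' ↑s) = ⊤ := by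
    rw [eq_top_iff]
    intro d _
    obtain ⟨α, rfl⟩ := hFsurj d
    exact main α (hs ▸ Submodule.mem_top)
  calc Module.rank ↥(pPowSubfield k p) k
      = Module.rank ↥(pPowSubfield k p)
        ↥(⊤ : Submodule ↥(pPowSubfield k p) k) := (rank_top _ _).symm
    _ = Module.rank ↥(pPowSubfield k p)
        ↥(Submodule.span ↥(pPowSubfield k p) (F '' ↑s)) := by rw [htop]
    _ ≤ Cardinal.mk (F '' ↑s) := rank_span_le _
    _ < Cardinal.aleph0 := (s.finite_toSet.image F).lt_aleph0

theorem pDegreeRes_congr {F : Type*} [Field F] (S T : ValuationSubring F) (h : S = T) (p : ℕ) :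
    pDegreeRes (IsLocalRing.ResidueField ↥S) p = pDegreeRes (IsLocalRing.ResidueField ↥T) p := by
  subst h; rfl

set_option maxHeartbeats 1000000 in
/-- if `(K,v)` is a maximal valued field of characteristic `p > 0` of infinite
`p`-degree, then `(K^{1/p}, v)` (with the unique extension of `v`) is again maximal, although
`vK^{1/p}/vK` is an infinite torsion group or `K^{1/p}v | Kv` is an infinite algebraic
extension. -/
theorem pRootField_maximal_of_infinite_pDegree
    {Γ : Type u} [LinearOrderedCommGroupWithZero Γ]
    {Γ' : Type u} [LinearOrderedCommGroupWithZero Γ']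
    {K : Type u} [Field K] (p : ℕ) [Fact p.Prime] [CharP K p]
    (v : Valuation K Γ) (hmax : IsMaximalField v)
    (hinf : Cardinal.aleph0 ≤ pIndexVal v p * pDegreeRes (resField v) p)
    (w : Valuation (↥(pRootField K p)) Γ') (hw : (w.comap (pRootEmb K p)).IsEquiv v) :
    IsMaximalField w ∧
      ((Monoid.IsTorsion
          (↥(valGroup w) ⧸ ((valGroup (w.comap (pRootEmb K p))).subgroupOf (valGroup w))) ∧
        Infinite
          (↥(valGroup w) ⧸ ((valGroup (w.comap (pRootEmb K p))).subgroupOf (valGroup w)))) ∨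
      (letI : Algebra (resField (w.comap (pRootEmb K p))) (resField w) :=
        (residueMap (pRootEmb K p) w).toAlgebra
       Algebra.IsAlgebraic (resField (w.comap (pRootEmb K p))) (resField w) ∧
        ¬ FiniteDimensional (resField (w.comap (pRootEmb K p))) (resField w))) := by
  classical
  have hp : p ≠ 0 := (Fact.out : p.Prime).ne_zero
  -- basic value-comparison facts
  have hwle : ∀ a b : K, w (pRootEmb K p a) ≤ w (pRootEmb K p b) ↔ v a ≤ v b := fun a b => hw a b
  have hweq : ∀ a b : K, w (pRootEmb K p a) = w (pRootEmb K p b) → v a = v b := fun a b hab =>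
    le_antisymm ((hwle a b).1 hab.le) ((hwle b a).1 hab.ge)
  have hveq : ∀ a b : K, v a = v b → w (pRootEmb K p a) = w (pRootEmb K p b) := fun a b hab =>
    le_antisymm ((hwle a b).2 hab.le) ((hwle b a).2 hab.ge)
  have hrpow : ∀ a : K, w (pRootInv K p a) ^ p = w (pRootEmb K p a) := fun a => by
    rw [← Valuation.map_pow, pRootInv_pow]
  -- Part 1: maximality
  have hmaxw : IsMaximalField w := by
    intro L _ f w' hcomap himm
    have hwf : ∀ z : ↥(pRootField K p), w' (f z) = w z := fun z => by rw [← hcomap]; rfl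
    set g : K →+* L := f.comp (pRootInv K p) with hg
    have hgval : ∀ a : K, w' (g a) = w (pRootInv K p a) := fun a => hwf _
    have hequiv : ∀ a b : K, w' (g a) ≤ w' (g b) ↔ v a ≤ v b := by
      intro a b
      rw [hgval, hgval, ← aux_pow_le_pow_iff hp, hrpow, hrpow]
      exact hwle a b
    have hsurj : ∀ x : L, x ≠ 0 → ∃ a : K, w' (g a) = w' x := by
      intro x hx
      obtain ⟨y, hy⟩ := himm.1 x hx
      obtain ⟨a, ha⟩ := pRootInv_surjective K p y
      refine ⟨a, ?_⟩
      rw [hg]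
      simp only [RingHom.comp_apply]
      rw [ha]; exact hy
    obtain ⟨u, hu1, hu2⟩ := exists_val_of_equiv g v w' hsurj hequiv
    have hgsurj : Function.Surjective g := by
      apply hmax L g u hu1
      constructor
      · intro x hx
        obtain ⟨a, ha⟩ := hsurj x hx
        exact ⟨a, le_antisymm ((hu2 _ _).2 ha.le) ((hu2 _ _).2 ha.ge)⟩
      · intro x hxle
        have hx1 : w' x ≤ 1 := by
          have h1 : u x ≤ u 1 := by rwa [Valuation.map_one]
          have h2 := (hu2 x 1).1 h1
          rwa [Valuation.map_one] at h2
        obtain ⟨y, hy⟩ := himm.2 x hx1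
        obtain ⟨a, ha⟩ := pRootInv_surjective K p y
        refine ⟨a, ?_⟩
        have hgay : g a = f y := by rw [hg]; simp only [RingHom.comp_apply, ha]
        rw [hgay]
        have hnle : ¬ (u 1 ≤ u (x - f y)) := by
          intro hle
          have h3 := (hu2 _ _).1 hle
          rw [Valuation.map_one] at h3
          exact absurd hy (not_lt.mpr h3)
        rw [Valuation.map_one] at hnle
        exact not_le.mp hnle
    intro y
    obtain ⟨a, ha⟩ := hgsurj y
    exact ⟨pRootInv K p a, ha⟩
  refine ⟨hmaxw, ?_⟩
  have hcases : Cardinal.aleph0 ≤ pIndexVal v p ∨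
      Cardinal.aleph0 ≤ pDegreeRes (resField v) p := by
    by_contra hcon
    push_neg at hcon
    exact absurd hinf (not_le.mpr (Cardinal.mul_lt_aleph0 hcon.1 hcon.2))
  rcases hcases with hval | hres
  · -- value group case
    left
    set N := (valGroup (w.comap (pRootEmb K p))).subgroupOf (valGroup w) with hN
    set Vm := v.toMonoidWithZeroHom.toMonoidHom with hVm
    set Wm := w.toMonoidWithZeroHom.toMonoidHom with hWm
    constructor
    · -- torsion
      intro q
      obtain ⟨γ, rfl⟩ := QuotientGroup.mk'_surjective N q
      rw [isOfFinOrder_iff_pow_eq_one]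
      refine ⟨p, (Fact.out : p.Prime).pos, ?_⟩
      rw [← map_pow, QuotientGroup.mk'_apply, QuotientGroup.eq_one_iff, Subgroup.mem_subgroupOf]
      obtain ⟨zu, hzu⟩ := γ.2
      obtain ⟨a, ha⟩ := pRootInv_surjective K p ↑zu
      have ha0 : a ≠ 0 := fun h0 => Units.ne_zero zu (by rw [← ha, h0, map_zero])
      refine MonoidHom.mem_range.mpr ⟨Units.mk0 a ha0, Units.ext ?_⟩
      have h2 : ((γ : Γ'ˣ) : Γ') = w ↑zu := by rw [← hzu]; rfl
      show w (pRootEmb K p a) = (((γ ^ p : ↥(valGroup w)) : Γ'ˣ) : Γ')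
      have h3 : (((γ ^ p : ↥(valGroup w)) : Γ'ˣ) : Γ') = (((γ : Γ'ˣ) : Γ')) ^ p := rfl
      rw [h3, h2, ← ha, ← hrpow]
    · -- infinite quotient
      set rm := (pRootInv K p).toMonoidHom with hrm
      have hmem : ∀ x : Kˣ, ((Units.map Wm).comp (Units.map rm)) x ∈ valGroup w :=
        fun x => ⟨Units.map rm x, rfl⟩
      set φ : Kˣ →* ↥(valGroup w) :=
        ((Units.map Wm).comp (Units.map rm)).codRestrict (valGroup w) hmem with hφ
      set ψ : Kˣ →* (↥(valGroup w) ⧸ N) := (QuotientGroup.mk' N).comp φ with hψ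
      have hmem' : ∀ x : Kˣ, Units.map Vm x ∈ valGroup v := fun x => ⟨x, rfl⟩
      set φ' : Kˣ →* ↥(valGroup v) := (Units.map Vm).codRestrict (valGroup v) hmem' with hφ'
      set N' := (pMulSubgroup (valGroup v) p).subgroupOf (valGroup v) with hN'
      set ψ' : Kˣ →* (↥(valGroup v) ⧸ N') := (QuotientGroup.mk' N').comp φ' with hψ'
      have hψsurj : Function.Surjective ψ := by
        intro q
        obtain ⟨γ, rfl⟩ := QuotientGroup.mk'_surjective N q
        obtain ⟨zu, hzu⟩ := γ.2
        obtain ⟨a, ha⟩ := pRootInv_surjective K p ↑zu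
        have ha0 : a ≠ 0 := fun h0 => Units.ne_zero zu (by rw [← ha, h0, map_zero])
        refine ⟨Units.mk0 a ha0, ?_⟩
        show QuotientGroup.mk' N (φ (Units.mk0 a ha0)) = QuotientGroup.mk' N γ
        congr 1
        refine Subtype.ext ?_
        show Units.map Wm (Units.map rm (Units.mk0 a ha0)) = ↑γ
        rw [← hzu]
        congr 1
        exact Units.ext ha
      have hψ'surj : Function.Surjective ψ' := by
        intro q
        obtain ⟨γ, rfl⟩ := QuotientGroup.mk'_surjective N' q
        obtain ⟨xu, hxu⟩ := γ.2
        exact ⟨xu, congrArg _ (Subtype.ext hxu)⟩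
      have hker : ψ.ker = ψ'.ker := by
        ext x
        rw [MonoidHom.mem_ker, MonoidHom.mem_ker]
        have hx1 : ψ x = 1 ↔ ((φ x : Γ'ˣ) ∈ valGroup (w.comap (pRootEmb K p))) := by
          show QuotientGroup.mk' N (φ x) = 1 ↔ _
          rw [QuotientGroup.mk'_apply, QuotientGroup.eq_one_iff, Subgroup.mem_subgroupOf]
        have hx2 : ψ' x = 1 ↔ ((φ' x : Γˣ) ∈ pMulSubgroup (valGroup v) p) := by
          show QuotientGroup.mk' N' (φ' x) = 1 ↔ _
          rw [QuotientGroup.mk'_apply, QuotientGroup.eq_one_iff, Subgroup.mem_subgroupOf]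
        rw [hx1, hx2]
        constructor
        · intro hmem1
          obtain ⟨yu, hyu⟩ := MonoidHom.mem_range.mp hmem1
          have hyval : w (pRootEmb K p (↑yu : K)) = w (pRootInv K p (↑x : K)) :=
            congrArg Units.val hyu
          have h4 : w (pRootEmb K p ((↑yu : K) ^ p)) = w (pRootEmb K p ↑x) := by
            rw [map_pow, Valuation.map_pow, hyval]
            exact hrpow ↑x
          have h5 := hweq _ _ h4
          rw [Valuation.map_pow] at h5
          refine Subgroup.mem_map.mpr ⟨Units.map Vm yu, ⟨yu, rfl⟩, Units.ext ?_⟩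
          show (v (↑yu : K)) ^ p = v (↑x : K)
          exact h5
        · intro hmem2
          obtain ⟨δ, hδmem, hδ⟩ := Subgroup.mem_map.mp hmem2
          obtain ⟨yu, hyu⟩ := hδmem
          have h5 : (v (↑yu : K)) ^ p = v (↑x : K) := by
            have h6 := congrArg Units.val hδ
            rw [← hyu] at h6
            exact h6
          have h6 : v ((↑yu : K) ^ p) = v (↑x : K) := by rwa [Valuation.map_pow]
          have h7 : w (pRootEmb K p (↑yu : K)) ^ p = w (pRootInv K p (↑x : K)) ^ p := by
            rw [hrpow]
            have h8 := hveq _ _ h6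
            rw [map_pow, Valuation.map_pow] at h8
            exact h8
          exact MonoidHom.mem_range.mpr ⟨yu, Units.ext (aux_pow_inj hp h7)⟩
      have e1 := QuotientGroup.quotientKerEquivOfSurjective ψ hψsurj
      have e2 := QuotientGroup.quotientKerEquivOfSurjective ψ' hψ'surj
      have hc : Cardinal.mk (↥(valGroup w) ⧸ N) = pIndexVal v p := by
        calc Cardinal.mk (↥(valGroup w) ⧸ N)
            = Cardinal.mk (Kˣ ⧸ ψ.ker) := (Cardinal.mk_congr e1.toEquiv).symm
          _ = Cardinal.mk (Kˣ ⧸ ψ'.ker) := by rw [hker]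
          _ = Cardinal.mk (↥(valGroup v) ⧸ N') := Cardinal.mk_congr e2.toEquiv
          _ = pIndexVal v p := rfl
      exact Cardinal.infinite_iff.mpr (by rw [hc]; exact hval)
  · -- residue case
    right
    have hsub : (w.comap (pRootEmb K p)).valuationSubring = v.valuationSubring := by
      ext x
      show (w.comap (pRootEmb K p)) x ≤ 1 ↔ v x ≤ 1
      have h := hw x 1
      rwa [Valuation.map_one, Valuation.map_one] at h
    have heq := pDegreeRes_congr ((w.comap (pRootEmb K p)).valuationSubring)
      v.valuationSubring hsub p
    have hres' : Cardinal.aleph0 ≤ pDegreeRes (resField (w.comap (pRootEmb K p))) p := by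
      rw [heq]; exact hres
    have hchar : CharP (resField w) p := by
      rw [CharP.charP_iff_prime_eq_zero (Fact.out : p.Prime)]
      have hL0 : ((p : ℕ) : ↥(pRootField K p)) = 0 := by
        refine Subtype.val_injective ?_
        push_cast
        exact CharP.cast_eq_zero (AlgebraicClosure K) p
      have h0 : ((p : ℕ) : ↥w.valuationSubring) = 0 := by
        refine Subtype.val_injective ?_
        push_cast [hL0]
        rfl
      calc ((p : ℕ) : resField w)
          = IsLocalRing.residue _ ((p : ℕ) : ↥w.valuationSubring) := (map_natCast _ p).symm
        _ = 0 := by rw [h0, map_zero]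
    have hfrob : ∀ x y : resField w, (x + y) ^ p = x ^ p + y ^ p := by
      haveI := hchar
      intro x y
      exact add_pow_char x y p
    have hρres : ∀ x : ↥(w.comap (pRootEmb K p)).valuationSubring,
        residueMap (pRootEmb K p) w (IsLocalRing.residue _ x) =
          IsLocalRing.residue _ (integerMap (pRootEmb K p) w x) := fun x =>
      IsLocalRing.ResidueField.map_residue (integerMap (pRootEmb K p) w) x
    have h2 : ∀ α : resField w, ∃ c : resField (w.comap (pRootEmb K p)),
        residueMap (pRootEmb K p) w c = α ^ p := by
      intro α
      obtain ⟨z, rfl⟩ := IsLocalRing.residue_surjective (R := ↥w.valuationSubring) α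
      obtain ⟨a, ha⟩ := pRootInv_surjective K p (↑z : ↥(pRootField K p))
      have hea : pRootEmb K p a = (↑z : ↥(pRootField K p)) ^ p := by
        rw [← ha]; exact (pRootInv_pow K p a).symm
      have hmem : (w.comap (pRootEmb K p)) a ≤ 1 := by
        show w (pRootEmb K p a) ≤ 1
        rw [hea, Valuation.map_pow]
        have hz1 : w (↑z : ↥(pRootField K p)) ≤ 1 := z.2
        calc (w (↑z : ↥(pRootField K p))) ^ p ≤ 1 ^ p := (aux_pow_le_pow_iff hp).mpr hz1
          _ = 1 := one_pow p
      refine ⟨IsLocalRing.residue _ (⟨a, hmem⟩ : ↥(w.comap (pRootEmb K p)).valuationSubring), ?_⟩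
      rw [hρres, ← map_pow]
      congr 1
      refine Subtype.ext ?_
      show pRootEmb K p a = (↑z : ↥(pRootField K p)) ^ p
      exact hea
    have h1 : ∀ c : resField (w.comap (pRootEmb K p)), ∃ α : resField w,
        α ^ p = residueMap (pRootEmb K p) w c := by
      intro c
      obtain ⟨b, rfl⟩ := IsLocalRing.residue_surjective (R := ↥(w.comap (pRootEmb K p)).valuationSubring) c
      have hb : w (pRootEmb K p (↑b : K)) ≤ 1 := b.2
      have hz : w (pRootInv K p (↑b : K)) ≤ 1 := by
        have := (aux_pow_le_pow_iff (a := w (pRootInv K p (↑b : K))) (b := (1:Γ')) hp)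
        rw [one_pow, hrpow] at this
        exact this.mp hb
      refine ⟨IsLocalRing.residue _ (⟨pRootInv K p ↑b, hz⟩ : ↥w.valuationSubring), ?_⟩
      rw [hρres, ← map_pow]
      congr 1
      refine Subtype.ext ?_
      show (pRootInv K p (↑b : K)) ^ p = pRootEmb K p (↑b : K)
      exact pRootInv_pow K p ↑b
    have halg : letI : Algebra (resField (w.comap (pRootEmb K p))) (resField w) :=
        (residueMap (pRootEmb K p) w).toAlgebra
        Algebra.IsAlgebraic (resField (w.comap (pRootEmb K p))) (resField w) := by
      letI : Algebra (resField (w.comap (pRootEmb K p))) (resField w) :=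
        (residueMap (pRootEmb K p) w).toAlgebra
      refine ⟨fun α => ?_⟩
      obtain ⟨c, hc⟩ := h2 α
      refine ⟨Polynomial.X ^ p - Polynomial.C c,
        Polynomial.X_pow_sub_C_ne_zero (Fact.out : p.Prime).pos c, ?_⟩
      rw [map_sub, map_pow, Polynomial.aeval_X, Polynomial.aeval_C,
        RingHom.algebraMap_toAlgebra, hc, sub_self]
    have hnfd : ¬ (letI : Algebra (resField (w.comap (pRootEmb K p))) (resField w) :=
        (residueMap (pRootEmb K p) w).toAlgebra
        FiniteDimensional (resField (w.comap (pRootEmb K p))) (resField w)) := by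
      intro hfd
      have hlt := aux_rank_lt_of_fd (residueMap (pRootEmb K p) w) p hp hfrob h1 h2 hfd
      exact absurd hres' (not_le.mpr hlt)
    exact ⟨halg, hnfd⟩


end ValuedExt
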